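/- Let σ₁ < σ₂ be real numbers, let q : ℝ → ℝ be continuous on (σ₁,σ₂), and let ψ : ℝ → ℝ be three times continuously differentiable on (σ₁,σ₂) with ψ'(t) > 0 for all t ∈ (σ₁,σ₂), such that ψ' satisfies Kummer's equation relative to q on (σ₁,σ₂). Then every twice differentiable function y satisfying y'' + q·y = 0 on (σ₁,σ₂) can be written as y(t) = α·cos(ψ(t))/√(ψ'(t)) + β·sin(ψ(t))/√(ψ'(t)) for some real constants α and β; that is, the functions cos(ψ)/√(ψ') and sin(ψ)/√(ψ') form a basis of the space of solutions of y'' + q·y = 0 on (σ₁,σ₂). -/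

import Mathlib

/-!
Write `p = ψ'` and `w = p^{-1/2}`. Kummer's equation for `p` says exactly that
`w'' + (q - p²) w = 0`, and `w² p = 1` gives `2 w' p + w p' = 0`. With these two facts the
sine terms cancel in the second derivative of `w cos ψ` and `w sin ψ`, so both solve
`y'' + q y = 0`; their Wronskian is `w² p = 1`. Wronskians of solutions of an equation without
first-order term are constant, and a solution `y` is recovered from its Wronskians with the
basis as `y = W(y, w sin ψ) · w cos ψ - W(y, w cos ψ) · w sin ψ`.
-/

open Real Set

theorem ContDiffOn.hasDerivAt_deriv {𝕜 F : Type*} [NontriviallyNormedField 𝕜]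
    [NormedAddCommGroup F] [NormedSpace 𝕜 F] {f : 𝕜 → F} {s : Set 𝕜} {n : WithTop ℕ∞} {x : 𝕜}
    (hf : ContDiffOn 𝕜 n f s) (hs : IsOpen s) (hn : n ≠ 0) (hx : x ∈ s) :
    HasDerivAt f (deriv f x) x :=
  ((hf.contDiffAt (hs.mem_nhds hx)).differentiableAt hn).hasDerivAt

/-- `y'` stands for the derivative of `y`; carrying it explicitly keeps `deriv`'s junk values
out of the statements. -/
def IsSolutionOn (q : ℝ → ℝ) (s : Set ℝ) (y y' : ℝ → ℝ) : Prop :=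
  ∀ t ∈ s, HasDerivAt y (y' t) t ∧ HasDerivAt y' (-(q t * y t)) t

namespace IsSolutionOn

variable {q : ℝ → ℝ} {s : Set ℝ} {u u' v v' y y' : ℝ → ℝ}

theorem of_deriv (hy : ∀ t ∈ s, DifferentiableAt ℝ y t ∧ DifferentiableAt ℝ (deriv y) t)
    (hq : ∀ t ∈ s, deriv (deriv y) t + q t * y t = 0) : IsSolutionOn q s y (deriv y) :=
  fun t ht => ⟨(hy t ht).1.hasDerivAt,
    (hy t ht).2.hasDerivAt.congr_deriv (by linarith [hq t ht])⟩

theorem hasDerivAt_wronskian (hu : IsSolutionOn q s u u') (hv : IsSolutionOn q s v v')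
    {t : ℝ} (ht : t ∈ s) : HasDerivAt (fun t => u t * v' t - u' t * v t) 0 t := by
  obtain ⟨hu₀, hu₁⟩ := hu t ht
  obtain ⟨hv₀, hv₁⟩ := hv t ht
  exact ((hu₀.mul hv₁).sub (hu₁.mul hv₀)).congr_deriv (by ring)

theorem exists_wronskian_eq (hs : IsOpen s) (hs' : IsPreconnected s)
    (hu : IsSolutionOn q s u u') (hv : IsSolutionOn q s v v') :
    ∃ C, ∀ t ∈ s, u t * v' t - u' t * v t = C :=
  hs.exists_is_const_of_deriv_eq_zero hs'
    (fun _ ht => (hu.hasDerivAt_wronskian hv ht).differentiableAt.differentiableWithinAt)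
    (fun _ ht => (hu.hasDerivAt_wronskian hv ht).deriv)

theorem exists_eq_linear_combination (hs : IsOpen s) (hs' : IsPreconnected s)
    (hu : IsSolutionOn q s u u') (hv : IsSolutionOn q s v v')
    (huv : ∀ t ∈ s, u t * v' t - u' t * v t = 1) (hy : IsSolutionOn q s y y') :
    ∃ α β : ℝ, ∀ t ∈ s, y t = α * u t + β * v t := by
  obtain ⟨α, hα⟩ := exists_wronskian_eq hs hs' hy hv
  obtain ⟨β, hβ⟩ := exists_wronskian_eq hs hs' hy hu
  refine ⟨α, -β, fun t ht => ?_⟩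
  linear_combination (-y t) * huv t ht + u t * hα t ht - v t * hβ t ht

end IsSolutionOn

section AmplitudePhase

variable {q w w' ψ p p' : ℝ → ℝ} {s : Set ℝ}

theorem isSolutionOn_mul_cos (hw : IsSolutionOn (fun t => q t - p t ^ 2) s w w')
    (hψ : ∀ t ∈ s, HasDerivAt ψ (p t) t) (hp : ∀ t ∈ s, HasDerivAt p (p' t) t)
    (hwp : ∀ t ∈ s, 2 * w' t * p t + w t * p' t = 0) :
    IsSolutionOn q s (fun t => w t * cos (ψ t))
      (fun t => w' t * cos (ψ t) - w t * p t * sin (ψ t)) := by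
  intro t ht
  obtain ⟨hw₀, hw₁⟩ := hw t ht
  have hcos := (hψ t ht).cos
  have hsin := (hψ t ht).sin
  refine ⟨(hw₀.mul hcos).congr_deriv (by ring),
    ((hw₁.mul hcos).sub ((hw₀.mul (hp t ht)).mul hsin)).congr_deriv ?_⟩
  simp only [Pi.mul_apply]
  linear_combination (-sin (ψ t)) * hwp t ht

theorem isSolutionOn_mul_sin (hw : IsSolutionOn (fun t => q t - p t ^ 2) s w w')
    (hψ : ∀ t ∈ s, HasDerivAt ψ (p t) t) (hp : ∀ t ∈ s, HasDerivAt p (p' t) t)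
    (hwp : ∀ t ∈ s, 2 * w' t * p t + w t * p' t = 0) :
    IsSolutionOn q s (fun t => w t * sin (ψ t))
      (fun t => w' t * sin (ψ t) + w t * p t * cos (ψ t)) := by
  simpa only [cos_sub_pi_div_two, sin_sub_pi_div_two, mul_neg, sub_neg_eq_add] using
    isSolutionOn_mul_cos (ψ := fun t => ψ t - π / 2) hw (fun t ht => (hψ t ht).sub_const _) hp hwp

theorem wronskian_mul_cos_mul_sin (w w' ψ p : ℝ) :
    w * cos ψ * (w' * sin ψ + w * p * cos ψ) - (w' * cos ψ - w * p * sin ψ) * (w * sin ψ)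
      = w ^ 2 * p := by
  linear_combination w ^ 2 * p * cos_sq_add_sin_sq ψ

end AmplitudePhase

section InvSqrt

variable {q p p' p'' : ℝ → ℝ} {s : Set ℝ}

theorem HasDerivAt.inv_sqrt {x p₁ : ℝ} (hp : HasDerivAt p p₁ x) (hpos : 0 < p x) :
    HasDerivAt (fun t => (√(p t))⁻¹) (-(p₁ / (2 * p x)) * (√(p x))⁻¹) x := by
  have hsqrt : √(p x) ≠ 0 := by positivity
  refine ((hp.sqrt hpos.ne').inv hsqrt).congr_deriv ?_
  rw [sq_sqrt hpos.le]
  field_simp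

theorem isSolutionOn_inv_sqrt (hpos : ∀ t ∈ s, 0 < p t) (hp : ∀ t ∈ s, HasDerivAt p (p' t) t)
    (hp' : ∀ t ∈ s, HasDerivAt p' (p'' t) t)
    (hkummer : ∀ t ∈ s,
      q t - p t ^ 2 - (1 / 2) * (p'' t / p t) + (3 / 4) * (p' t / p t) ^ 2 = 0) :
    IsSolutionOn (fun t => q t - p t ^ 2) s (fun t => (√(p t))⁻¹)
      (fun t => -(p' t / (2 * p t)) * (√(p t))⁻¹) := by
  intro t ht
  have hw := (hp t ht).inv_sqrt (hpos t ht)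
  have hp0 := (hpos t ht).ne'
  have hlog := (hp' t ht).div ((hp t ht).const_mul 2) (mul_ne_zero two_ne_zero hp0)
  refine ⟨hw, (hlog.neg.mul hw).congr_deriv ?_⟩
  have hk : -(1 / 2) * (p'' t / p t) + (3 / 4) * (p' t / p t) ^ 2 = -(q t - p t ^ 2) := by
    linarith [hkummer t ht]
  simp only [Pi.neg_apply, Pi.div_apply]
  rw [neg_mul_eq_neg_mul, ← hk]
  field_simp
  ring

end InvSqrt

theorem phase_functions_give_basis_of_solutions_general (σ₁ σ₂ : ℝ) (q ψ : ℝ → ℝ)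
    (hψ : ContDiffOn ℝ 3 ψ (Ioo σ₁ σ₂))
    (hpos : ∀ t ∈ Ioo σ₁ σ₂, 0 < deriv ψ t)
    (hkummer : ∀ t ∈ Ioo σ₁ σ₂,
      q t - (deriv ψ t) ^ 2 - (1 / 2) * (deriv (deriv (deriv ψ)) t / deriv ψ t)
        + (3 / 4) * (deriv (deriv ψ) t / deriv ψ t) ^ 2 = 0) :
    ∀ y : ℝ → ℝ,
      (∀ t ∈ Ioo σ₁ σ₂, DifferentiableAt ℝ y t ∧ DifferentiableAt ℝ (deriv y) t) →
      (∀ t ∈ Ioo σ₁ σ₂, deriv (deriv y) t + q t * y t = 0) →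
      ∃ α β : ℝ, ∀ t ∈ Ioo σ₁ σ₂,
        y t = α * (Real.cos (ψ t) / Real.sqrt (deriv ψ t))
            + β * (Real.sin (ψ t) / Real.sqrt (deriv ψ t)) := by
  intro y hy hode
  have hψ₁ : ContDiffOn ℝ 2 (deriv ψ) (Ioo σ₁ σ₂) := hψ.deriv_of_isOpen isOpen_Ioo (by norm_num)
  have hψ₂ : ContDiffOn ℝ 1 (deriv (deriv ψ)) (Ioo σ₁ σ₂) :=
    hψ₁.deriv_of_isOpen isOpen_Ioo (by norm_num)
  have hψ' := fun t (ht : t ∈ Ioo σ₁ σ₂) => hψ.hasDerivAt_deriv isOpen_Ioo (by norm_num) ht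
  have hψ'' := fun t (ht : t ∈ Ioo σ₁ σ₂) => hψ₁.hasDerivAt_deriv isOpen_Ioo (by norm_num) ht
  have hψ''' := fun t (ht : t ∈ Ioo σ₁ σ₂) => hψ₂.hasDerivAt_deriv isOpen_Ioo (by norm_num) ht
  have hw := isSolutionOn_inv_sqrt hpos hψ'' hψ''' hkummer
  have hwp : ∀ t ∈ Ioo σ₁ σ₂, 2 * (-(deriv (deriv ψ) t / (2 * deriv ψ t)) * (√(deriv ψ t))⁻¹)
      * deriv ψ t + (√(deriv ψ t))⁻¹ * deriv (deriv ψ) t = 0 := fun t ht => by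
    field_simp [(hpos t ht).ne']
    ring
  obtain ⟨α, β, h⟩ := (isSolutionOn_mul_cos hw hψ' hψ'' hwp).exists_eq_linear_combination
    isOpen_Ioo isPreconnected_Ioo (isSolutionOn_mul_sin hw hψ' hψ'' hwp)
    (fun t ht => by rw [wronskian_mul_cos_mul_sin, inv_pow, sq_sqrt (hpos t ht).le,
      inv_mul_cancel₀ (hpos t ht).ne'])
    (IsSolutionOn.of_deriv hy hode)
  exact ⟨α, β, fun t ht => by rw [h t ht]; ring⟩

theorem phase_functions_give_basis_of_solutions (σ₁ σ₂ : ℝ) (hσ : σ₁ < σ₂) (q ψ : ℝ → ℝ)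
    (hq : ContinuousOn q (Ioo σ₁ σ₂))
    (hψ : ContDiffOn ℝ 3 ψ (Ioo σ₁ σ₂))
    (hpos : ∀ t ∈ Ioo σ₁ σ₂, 0 < deriv ψ t)
    (hkummer : ∀ t ∈ Ioo σ₁ σ₂,
      q t - (deriv ψ t) ^ 2 - (1 / 2) * (deriv (deriv (deriv ψ)) t / deriv ψ t)
        + (3 / 4) * (deriv (deriv ψ) t / deriv ψ t) ^ 2 = 0) :
    ∀ y : ℝ → ℝ,
      (∀ t ∈ Ioo σ₁ σ₂, DifferentiableAt ℝ y t ∧ DifferentiableAt ℝ (deriv y) t) →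
      (∀ t ∈ Ioo σ₁ σ₂, deriv (deriv y) t + q t * y t = 0) →
      ∃ α β : ℝ, ∀ t ∈ Ioo σ₁ σ₂,
        y t = α * (Real.cos (ψ t) / Real.sqrt (deriv ψ t))
            + β * (Real.sin (ψ t) / Real.sqrt (deriv ψ t)) :=
  phase_functions_give_basis_of_solutions_general σ₁ σ₂ q ψ hψ hpos hkummer
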